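/- Discrete summation-by-parts estimate: for real sequences w = (w⁰,…,w^{n+1}) and g = (g⁰,…,g^{n+1}) and τ > 0, letting δ_t w^{k+1/2} := (w^{k+1} − w^k)/τ, we have |2τ·∑_{k=0}^{n} g^k·δ_t w^{k+1/2}| ≤ τ·∑_{k=1}^{n} |w^k|² + τ·∑_{k=0}^{n−1} |δ_t g^{k+1/2}|² + (1/2)|w^{n+1}|² + 2|g^n|² + |w⁰|² + |g⁰|². -/
import Mathlib


theorem discrete_summation_by_parts (n : ℕ) (hn : 1 ≤ n) (τ : ℝ) (hτ : 0 < τ)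
    (w g : ℕ → ℝ) :
    |2 * τ * ∑ k ∈ Finset.range (n + 1), g k * ((w (k + 1) - w k) / τ)| ≤
      τ * ∑ k ∈ Finset.Icc 1 n, |w k| ^ 2
      + τ * ∑ k ∈ Finset.range n, |(g (k + 1) - g k) / τ| ^ 2
      + (1 / 2) * |w (n + 1)| ^ 2 + 2 * |g n| ^ 2 + |w 0| ^ 2 + |g 0| ^ 2 := by
  have hτ' : τ ≠ 0 := ne_of_gt hτ
  -- Abel summation
  have habel : ∀ m : ℕ, ∑ k ∈ Finset.range (m+1), g k * (w (k+1) - w k)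
      = g m * w (m+1) - g 0 * w 0 - ∑ k ∈ Finset.range m, (g (k+1) - g k) * w (k+1) := by
    intro m
    induction m with
    | zero => simp; ring
    | succ m ih =>
      rw [Finset.sum_range_succ, ih, Finset.sum_range_succ]; ring
  have h1 : 2 * τ * ∑ k ∈ Finset.range (n + 1), g k * ((w (k + 1) - w k) / τ)
      = 2 * ∑ k ∈ Finset.range (n+1), g k * (w (k+1) - w k) := by
    rw [Finset.mul_sum, Finset.mul_sum]
    refine Finset.sum_congr rfl (fun k _ => ?_)
    field_simp
  rw [h1, habel]
  set S := ∑ k ∈ Finset.range n, (g (k+1) - g k) * w (k+1) with hS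
  -- rewrite the Icc sum
  have hIcc : τ * ∑ k ∈ Finset.Icc 1 n, |w k| ^ 2
      = ∑ k ∈ Finset.range n, τ * w (k+1) ^ 2 := by
    rw [show Finset.Icc 1 n = Finset.Ico 1 (n+1) by rw [Finset.Ico_add_one_right_eq_Icc],
      Finset.sum_Ico_eq_sum_range]
    simp only [Nat.add_sub_cancel, sq_abs]
    rw [Finset.mul_sum]
    refine Finset.sum_congr rfl (fun k _ => ?_)
    ring_nf
  have hg : τ * ∑ k ∈ Finset.range n, |(g (k + 1) - g k) / τ| ^ 2
      = ∑ k ∈ Finset.range n, (g (k+1) - g k) ^ 2 / τ := by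
    rw [Finset.mul_sum]
    refine Finset.sum_congr rfl (fun k _ => ?_)
    rw [sq_abs]
    field_simp
  rw [hIcc, hg]
  -- bound the middle sum
  have hsum : |2 * S| ≤ ∑ k ∈ Finset.range n, (τ * w (k+1) ^ 2 + (g (k+1) - g k) ^ 2 / τ) := by
    calc |2 * S| = |∑ k ∈ Finset.range n, 2 * ((g (k+1) - g k) * w (k+1))| := by
          rw [hS, Finset.mul_sum]
      _ ≤ ∑ k ∈ Finset.range n, |2 * ((g (k+1) - g k) * w (k+1))| :=
          Finset.abs_sum_le_sum_abs _ _
      _ ≤ ∑ k ∈ Finset.range n, (τ * w (k+1) ^ 2 + (g (k+1) - g k) ^ 2 / τ) := by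
          refine Finset.sum_le_sum (fun k _ => ?_)
          rw [abs_le]
          have hc : (g (k+1) - g k) ^ 2 / τ * τ = (g (k+1) - g k) ^ 2 :=
            div_mul_cancel₀ _ hτ'
          constructor <;>
            nlinarith [sq_nonneg (g (k+1) - g k - τ * w (k+1)),
              sq_nonneg (g (k+1) - g k + τ * w (k+1)), hτ, hc,
              div_nonneg (sq_nonneg (g (k+1) - g k)) hτ.le]
  have hA : |2 * (g n * w (n+1))| ≤ 2 * |g n| ^ 2 + (1/2) * |w (n+1)| ^ 2 := by
    rw [abs_mul, abs_mul, abs_two]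
    nlinarith [sq_nonneg (2 * |g n| - |w (n+1)|), abs_nonneg (g n), abs_nonneg (w (n+1))]
  have hB : |2 * (g 0 * w 0)| ≤ |g 0| ^ 2 + |w 0| ^ 2 := by
    rw [abs_mul, abs_mul, abs_two]
    nlinarith [sq_nonneg (|g 0| - |w 0|), abs_nonneg (g 0), abs_nonneg (w 0)]
  have hsplit : ∑ k ∈ Finset.range n, (τ * w (k+1) ^ 2 + (g (k+1) - g k) ^ 2 / τ)
      = ∑ k ∈ Finset.range n, τ * w (k+1) ^ 2 + ∑ k ∈ Finset.range n, (g (k+1) - g k) ^ 2 / τ :=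
    Finset.sum_add_distrib
  have htri : |2 * (g n * w (n+1) - g 0 * w 0 - S)|
      ≤ |2 * (g n * w (n+1))| + |2 * (g 0 * w 0)| + |2 * S| := by
    have : 2 * (g n * w (n+1) - g 0 * w 0 - S)
        = 2 * (g n * w (n+1)) + (- (2 * (g 0 * w 0))) + (- (2 * S)) := by ring
    rw [this]
    calc |2 * (g n * w (n+1)) + (- (2 * (g 0 * w 0))) + (- (2 * S))|
        ≤ |2 * (g n * w (n+1)) + (- (2 * (g 0 * w 0)))| + |(- (2 * S))| := abs_add_le _ _
      _ ≤ |2 * (g n * w (n+1))| + |(- (2 * (g 0 * w 0)))| + |(- (2 * S))| := by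
          gcongr; exact abs_add_le _ _
      _ = _ := by rw [abs_neg, abs_neg]
  rw [hsplit] at hsum
  linarith [htri, hA, hB, hsum]
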